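/- arXiv:2201.11426 — 2 statements merged into one kernel-verified Lean document; each statement's English description precedes it below -/
import Mathlib

section
/- Let (T, T̃) be a joint pair of abstract Friedrichs operators on a complex Hilbert space H. Then T and T̃ are closable, the closures T̄ and closure(T̃) have the same domain W₀, the adjoints T̃* and T* have the same domain W, the graph norms ‖·‖_{T̃*} and ‖·‖_{T*} are equivalent on W, the restriction of the closure of T + T̃ to W equals T̃* + T*, and (T̄, closure(T̃)) is again a joint pair of abstract Friedrichs operators. -/
/-!
By (T2) the symmetric operator `T + T̃` extends to a bounded self-adjoint operator `A` on all of
`H`, and by (T1) `T ⊆ T̃*` and `T̃ ⊆ T*`, so both operators are closable. On the common domain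
`T̃ = A - T`; since `A` is continuous this identity passes to the closures, and since `A` is
self-adjoint it passes to the adjoints as `T̃* = A - T*`. All the claims are read off these two
identities: (T2) and (T3) for the closures hold because `T̄ + closure(T̃) = A`, and `A` inherits
its bound and its coercivity from the dense domain.
-/

open LinearPMap
open scoped LinearPMap

noncomputable section

variable {H : Type*} [NormedAddCommGroup H] [InnerProductSpace ℂ H] [CompleteSpace H]

local notation "⟪" x ", " y "⟫" => @inner ℂ _ _ x y

/-- Conditions (T1)–(T2) for a pair of operators with common dense domain. -/
structure IsPreFriedrichsPair (T Tt : H →ₗ.[ℂ] H) : Prop where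
  dom_eq : T.domain = Tt.domain
  dense' : Dense (T.domain : Set H)
  t1 : ∀ (φ : T.domain) (ψ : Tt.domain), ⟪T φ, (ψ : H)⟫ = ⟪(φ : H), Tt ψ⟫
  t2 : ∃ c : ℝ, 0 < c ∧ ∀ φ : (T + Tt).domain, ‖(T + Tt) φ‖ ≤ c * ‖(φ : H)‖

/-- A joint pair of abstract Friedrichs operators: (T1)–(T3). -/
structure IsFriedrichsPair (T Tt : H →ₗ.[ℂ] H) extends IsPreFriedrichsPair T Tt : Prop where
  t3 : ∃ μ₀ : ℝ, 0 < μ₀ ∧ ∀ φ : (T + Tt).domain,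
        2 * μ₀ * ‖(φ : H)‖ ^ 2 ≤ (⟪(T + Tt) φ, (φ : H)⟫).re

namespace LinearPMap

section Normed

variable {𝕜 E F : Type*} [NontriviallyNormedField 𝕜] [NormedAddCommGroup E] [NormedSpace 𝕜 E]
  [NormedAddCommGroup F] [NormedSpace 𝕜 F]

theorem IsClosed.closure_eq {f : E →ₗ.[𝕜] F} (hf : f.IsClosed) : f.closure = f :=
  eq_of_eq_graph <| by
    rw [← hf.isClosable.graph_closure_eq_closure_graph, hf.submodule_topologicalClosure_eq]

theorem closure_le_of_isClosed {f g : E →ₗ.[𝕜] F} (hg : g.IsClosed) (h : f ≤ g) :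
    f.closure ≤ g :=
  hg.closure_eq ▸ hg.isClosable.closure_mono h

theorem exists_extension_of_norm_le [CompleteSpace F] (f : E →ₗ.[𝕜] F)
    (hf : Dense (f.domain : Set E)) {c : ℝ} (hc : ∀ x : f.domain, ‖f x‖ ≤ c * ‖(x : E)‖) :
    ∃ A : E →L[𝕜] F, (∀ x, ‖A x‖ ≤ c * ‖x‖) ∧ ∀ x : f.domain, A x = f x := by
  have hfA : ∀ x : f.domain, f.toFun.extendOfNorm f.domain.subtype x = f x :=
    LinearMap.extendOfNorm_eq hf.denseRange_val ⟨c, hc⟩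
  refine ⟨_, fun x ↦ hf.induction (P := fun x ↦ ‖_‖ ≤ c * ‖x‖) (fun x hx ↦ ?_)
    (isClosed_le (by fun_prop) (by fun_prop)) x, hfA⟩
  simpa only [hfA ⟨x, hx⟩] using hc ⟨x, hx⟩

theorem IsClosable.sub_closure_mem_graph {T S : E →ₗ.[𝕜] F} (hT : T.IsClosable)
    (hS : S.IsClosable) {A : E →L[𝕜] F} (h : ∀ x : T.domain, ((x : E), A x - T x) ∈ S.graph)
    (x : T.closure.domain) : ((x : E), A x - T.closure x) ∈ S.closure.graph := by
  have hclosed : _root_.IsClosed {p : E × F | (p.1, A p.1 - p.2) ∈ S.closure.graph} :=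
    hS.closure_isClosed.preimage (by fun_prop)
  have hgraph : (T.graph : Set (E × F)) ⊆ {p | (p.1, A p.1 - p.2) ∈ S.closure.graph} := by
    rintro ⟨a, b⟩ hp
    obtain ⟨y, rfl, rfl⟩ := T.mem_graph_iff.mp hp
    exact le_graph_of_le (le_closure S) (h y)
  have hx : ((x : E), T.closure x) ∈ _root_.closure (T.graph : Set (E × F)) := by
    rw [← Submodule.topologicalClosure_coe, hT.graph_closure_eq_closure_graph]
    exact T.closure.mem_graph x
  exact closure_minimal hgraph hclosed hx

theorem mem_closure_graph_of_extension {S : E →ₗ.[𝕜] F} (hS : S.IsClosable)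
    (hd : Dense (S.domain : Set E)) {A : E →L[𝕜] F} (hA : ∀ x : S.domain, A x = S x) (x : E) :
    (x, A x) ∈ S.closure.graph :=
  hd.induction (P := fun x ↦ (x, A x) ∈ S.closure.graph)
    (fun x hx ↦ hA ⟨x, hx⟩ ▸ le_graph_of_le (le_closure S) (S.mem_graph ⟨x, hx⟩))
    (hS.closure_isClosed.preimage (by fun_prop)) x

end Normed

section Inner

variable {𝕜 E F : Type*} [RCLike 𝕜] [NormedAddCommGroup E] [InnerProductSpace 𝕜 E]
  [NormedAddCommGroup F] [InnerProductSpace 𝕜 F]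

theorem IsFormalAdjoint.mono {T T' : E →ₗ.[𝕜] F} {S S' : F →ₗ.[𝕜] E}
    (h : T.IsFormalAdjoint S) (hT : T' ≤ T) (hS : S' ≤ S) : T'.IsFormalAdjoint S' :=
  fun x y ↦ by
    rw [hT.2 (y := ⟨x, hT.1 x.2⟩) rfl, hS.2 (y := ⟨y, hS.1 y.2⟩) rfl]
    exact h ⟨x, hT.1 x.2⟩ ⟨y, hS.1 y.2⟩

theorem IsFormalAdjoint.isClosable [CompleteSpace F] {T : E →ₗ.[𝕜] F} {S : F →ₗ.[𝕜] E}
    (h : T.IsFormalAdjoint S) (hS : Dense (S.domain : Set F)) : T.IsClosable :=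
  (adjoint_isClosed hS).isClosable.leIsClosable (h.symm.le_adjoint hS)

theorem IsFormalAdjoint.closure [CompleteSpace E] [CompleteSpace F]
    {T : E →ₗ.[𝕜] F} {S : F →ₗ.[𝕜] E}
    (h : T.IsFormalAdjoint S) (hT : Dense (T.domain : Set E)) (hS : Dense (S.domain : Set F)) :
    T.closure.IsFormalAdjoint S.closure := by
  have hTc : Dense (T.closure.domain : Set E) := hT.mono (le_closure T).1
  have hTS : T.closure.IsFormalAdjoint S := (adjoint_isFormalAdjoint hS).mono
    (closure_le_of_isClosed (adjoint_isClosed hS) (h.symm.le_adjoint hS)) le_rfl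
  have hST : S.closure ≤ T.closure† :=
    closure_le_of_isClosed (adjoint_isClosed hTc) (hTS.le_adjoint hTc)
  exact (adjoint_isFormalAdjoint hTc).symm.mono le_rfl hST

theorem IsFormalAdjoint.isSymmetric_of_extension {S : E →ₗ.[𝕜] E} (hS : S.IsFormalAdjoint S)
    (hd : Dense (S.domain : Set E)) {A : E →L[𝕜] E} (hA : ∀ x : S.domain, A x = S x) :
    (A : E →ₗ[𝕜] E).IsSymmetric := fun x y ↦
  (hd.prod hd).induction (P := fun p ↦ inner 𝕜 (A p.1) p.2 = inner 𝕜 p.1 (A p.2))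
    (fun p ⟨h1, h2⟩ ↦ by rw [hA ⟨p.1, h1⟩, hA ⟨p.2, h2⟩]; exact hS ⟨p.1, h1⟩ ⟨p.2, h2⟩)
    (isClosed_eq (by fun_prop) (by fun_prop)) (x, y)

theorem sub_adjoint_mem_graph [CompleteSpace E] {T S : E →ₗ.[𝕜] E}
    (hT : Dense (T.domain : Set E)) (hS : Dense (S.domain : Set E)) {A : E →L[𝕜] E}
    (hA : (A : E →ₗ[𝕜] E).IsSymmetric)
    (h : ∀ x : S.domain, ((x : E), A x - S x) ∈ T.graph) (u : T†.domain) :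
    ((u : E), A u - T† u) ∈ S†.graph := by
  have key : ∀ ψ : S.domain, inner 𝕜 (A u - T† u) (ψ : E) = inner 𝕜 (u : E) (S ψ) := by
    intro ψ
    obtain ⟨φ, hφψ, hTφ⟩ := T.mem_graph_iff.mp (h ψ)
    simp only at hφψ hTφ
    calc inner 𝕜 (A u - T† u) (ψ : E)
        = inner 𝕜 (u : E) (A ψ) - inner 𝕜 (u : E) (T φ) := by
          rw [inner_sub_left, ← hφψ, adjoint_isFormalAdjoint hT u φ]
          exact congrArg (· - _) (hA u φ)
      _ = inner 𝕜 (u : E) (S ψ) := by rw [hTφ, inner_sub_right, sub_sub_cancel]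
  exact (S†).mem_graph_iff.mpr
    ⟨⟨u, mem_adjoint_domain_of_exists _ ⟨_, key⟩⟩, rfl, adjoint_apply_eq hS _ key⟩

end Inner

end LinearPMap

theorem norm_sq_add_norm_sq_le_of_norm_add_le {E F : Type*} [SeminormedAddCommGroup E]
    [SeminormedAddCommGroup F] {u : E} {y z : F} {c : ℝ} (h : ‖y + z‖ ≤ c * ‖u‖) :
    ‖u‖ ^ 2 + ‖y‖ ^ 2 ≤ (2 + 2 * c ^ 2) * (‖u‖ ^ 2 + ‖z‖ ^ 2) := by
  have hy : ‖y‖ ≤ c * ‖u‖ + ‖z‖ :=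
    calc ‖y‖ = ‖(y + z) - z‖ := by rw [add_sub_cancel_right]
      _ ≤ ‖y + z‖ + ‖z‖ := norm_sub_le _ _
      _ ≤ c * ‖u‖ + ‖z‖ := by gcongr
  nlinarith [pow_le_pow_left₀ (norm_nonneg y) hy 2, sq_nonneg (c * ‖u‖ - ‖z‖), sq_nonneg ‖u‖,
    mul_nonneg (sq_nonneg c) (sq_nonneg ‖z‖)]

namespace IsPreFriedrichsPair

variable {E : Type*} [NormedAddCommGroup E] [InnerProductSpace ℂ E] {T Tt : E →ₗ.[ℂ] E}
  (hF : IsPreFriedrichsPair T Tt)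
include hF

theorem symm : IsPreFriedrichsPair Tt T where
  dom_eq := hF.dom_eq.symm
  dense' := hF.dom_eq ▸ hF.dense'
  t1 := LinearPMap.IsFormalAdjoint.symm (T := T) (S := Tt) hF.t1
  t2 := add_comm T Tt ▸ hF.t2

theorem isFormalAdjoint : T.IsFormalAdjoint Tt := hF.t1

theorem dense_domain_add : Dense ((T + Tt).domain : Set E) := by
  rw [add_domain, ← hF.dom_eq, inf_idem]
  exact hF.dense'

theorem isClosable [CompleteSpace E] : T.IsClosable :=
  hF.isFormalAdjoint.isClosable hF.symm.dense'

theorem isFormalAdjoint_add : (T + Tt).IsFormalAdjoint (T + Tt) := fun φ ψ ↦ by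
  rw [LinearPMap.add_apply, LinearPMap.add_apply, inner_add_left, inner_add_right,
    hF.isFormalAdjoint ⟨φ, φ.2.1⟩ ⟨ψ, ψ.2.2⟩, hF.symm.isFormalAdjoint ⟨φ, φ.2.2⟩ ⟨ψ, ψ.2.1⟩,
    add_comm]

theorem exists_extension [CompleteSpace E] : ∃ c, 0 < c ∧ ∃ A : E →L[ℂ] E,
    (∀ x, ‖A x‖ ≤ c * ‖x‖) ∧ ∀ x : (T + Tt).domain, A x = (T + Tt) x := by
  obtain ⟨c, hc, hbound⟩ := hF.t2
  exact ⟨c, hc, (T + Tt).exists_extension_of_norm_le hF.dense_domain_add hbound⟩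

section Extension

variable {A : E →L[ℂ] E} (hA : ∀ x : (T + Tt).domain, A x = (T + Tt) x)
include hA

theorem sub_mem_graph (x : T.domain) : ((x : E), A x - T x) ∈ Tt.graph := by
  have hx : (x : E) ∈ Tt.domain := hF.dom_eq ▸ x.2
  refine Tt.mem_graph_iff.mpr ⟨⟨x, hx⟩, rfl, ?_⟩
  show Tt ⟨x, hx⟩ = A x - T x
  rw [hA ⟨x, x.2, hx⟩, LinearPMap.add_apply, add_sub_cancel_left]

theorem closure_sub_mem_graph [CompleteSpace E] (x : T.closure.domain) :
    ((x : E), A x - T.closure x) ∈ Tt.closure.graph :=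
  hF.isClosable.sub_closure_mem_graph hF.symm.isClosable (hF.sub_mem_graph hA) x

theorem adjoint_sub_mem_graph [CompleteSpace E] (u : (T†).domain) :
    ((u : E), A u - (T†) u) ∈ (Tt†).graph :=
  sub_adjoint_mem_graph hF.dense' hF.symm.dense'
    (hF.isFormalAdjoint_add.isSymmetric_of_extension hF.dense_domain_add hA)
    (hF.symm.sub_mem_graph (add_comm T Tt ▸ hA)) u

theorem closure_domain_le [CompleteSpace E] : T.closure.domain ≤ Tt.closure.domain :=
  fun x hx ↦ mem_domain_of_mem_graph (hF.closure_sub_mem_graph hA ⟨x, hx⟩)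

theorem adjoint_domain_le [CompleteSpace E] : (T†).domain ≤ (Tt†).domain :=
  fun u hu ↦ mem_domain_of_mem_graph (hF.adjoint_sub_mem_graph hA ⟨u, hu⟩)

theorem closure_add_closure_apply [CompleteSpace E] (x : (T.closure + Tt.closure).domain) :
    (T.closure + Tt.closure) x = A x := by
  have hTt : Tt.closure ⟨x, x.2.2⟩ = A x - T.closure ⟨x, x.2.1⟩ :=
    Tt.closure.mem_graph_snd_inj (Tt.closure.mem_graph _)
      (hF.closure_sub_mem_graph hA ⟨x, x.2.1⟩) rfl
  rw [LinearPMap.add_apply, hTt, add_sub_cancel]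

theorem adjoint_add_adjoint_apply [CompleteSpace E] (u : (Tt†).domain) (v : (T†).domain)
    (huv : (u : E) = v) : (Tt†) u + (T†) v = A u := by
  have hTt : (Tt†) u = A v - (T†) v :=
    (Tt†).mem_graph_snd_inj ((Tt†).mem_graph u) (hF.adjoint_sub_mem_graph hA v) huv
  rw [hTt, huv, sub_add_cancel]

end Extension

variable [CompleteSpace E]

theorem closure_domain_eq : T.closure.domain = Tt.closure.domain := by
  obtain ⟨-, -, A, -, hA⟩ := hF.exists_extension
  exact le_antisymm (hF.closure_domain_le hA) (hF.symm.closure_domain_le (add_comm T Tt ▸ hA))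

theorem adjoint_domain_eq : (Tt†).domain = (T†).domain := by
  obtain ⟨-, -, A, -, hA⟩ := hF.exists_extension
  exact le_antisymm (hF.symm.adjoint_domain_le (add_comm T Tt ▸ hA)) (hF.adjoint_domain_le hA)

theorem adjoint_graphNorm_sq_equiv : ∃ c₁ : ℝ, 0 < c₁ ∧ ∃ c₂ : ℝ, 0 < c₂ ∧
    ∀ (u : (Tt†).domain) (v : (T†).domain), (u : E) = (v : E) →
      ‖(u : E)‖ ^ 2 + ‖(Tt†) u‖ ^ 2 ≤ c₁ * (‖(u : E)‖ ^ 2 + ‖(T†) v‖ ^ 2) ∧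
      ‖(u : E)‖ ^ 2 + ‖(T†) v‖ ^ 2 ≤ c₂ * (‖(u : E)‖ ^ 2 + ‖(Tt†) u‖ ^ 2) := by
  obtain ⟨c, -, A, hAc, hA⟩ := hF.exists_extension
  refine ⟨2 + 2 * c ^ 2, by positivity, 2 + 2 * c ^ 2, by positivity, fun u v huv ↦ ⟨?_, ?_⟩⟩
  · refine norm_sq_add_norm_sq_le_of_norm_add_le ?_
    rw [hF.adjoint_add_adjoint_apply hA u v huv]
    exact hAc u
  · refine norm_sq_add_norm_sq_le_of_norm_add_le ?_
    rw [add_comm, hF.adjoint_add_adjoint_apply hA u v huv]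
    exact hAc u

theorem closure_add_domRestrict_adjoint_domain :
    (T + Tt).closure.domRestrict (Tt†).domain = Tt† + T† := by
  obtain ⟨-, -, A, -, hA⟩ := hF.exists_extension
  have hgraph : ∀ x, (x, A x) ∈ (T + Tt).closure.graph :=
    mem_closure_graph_of_extension (hF.isFormalAdjoint_add.isClosable hF.dense_domain_add)
      hF.dense_domain_add hA
  refine LinearPMap.ext ?_ fun x hx hx' ↦ ?_
  · rw [domRestrict_domain, add_domain, hF.adjoint_domain_eq, inf_idem, inf_eq_left]
    exact fun x _ ↦ mem_domain_of_mem_graph (hgraph x)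
  · rw [LinearPMap.add_apply, hF.adjoint_add_adjoint_apply hA _ _ rfl]
    refine (domRestrict_apply (x := ⟨x, hx⟩) (y := ⟨x, hx.2⟩) rfl).trans ?_
    exact (T + Tt).closure.mem_graph_snd_inj ((T + Tt).closure.mem_graph _) (hgraph x) rfl

theorem closure : IsPreFriedrichsPair T.closure Tt.closure where
  dom_eq := hF.closure_domain_eq
  dense' := hF.dense'.mono (le_closure T).1
  t1 := hF.isFormalAdjoint.closure hF.dense' hF.symm.dense'
  t2 := by
    obtain ⟨c, hc, A, hAc, hA⟩ := hF.exists_extension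
    exact ⟨c, hc, fun x ↦ hF.closure_add_closure_apply hA x ▸ hAc x⟩

end IsPreFriedrichsPair

theorem IsFriedrichsPair.closure {E : Type*} [NormedAddCommGroup E] [InnerProductSpace ℂ E]
    [CompleteSpace E] {T Tt : E →ₗ.[ℂ] E} (hF : IsFriedrichsPair T Tt) :
    IsFriedrichsPair T.closure Tt.closure where
  toIsPreFriedrichsPair := hF.toIsPreFriedrichsPair.closure
  t3 := by
    obtain ⟨μ₀, hμ₀, ht3⟩ := hF.t3
    obtain ⟨-, -, A, -, hA⟩ := hF.exists_extension
    have hcoercive : ∀ x, 2 * μ₀ * ‖x‖ ^ 2 ≤ (⟪A x, x⟫).re :=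
      hF.dense_domain_add.induction (fun x hx ↦ hA ⟨x, hx⟩ ▸ ht3 ⟨x, hx⟩)
        (isClosed_le (by fun_prop) (by fun_prop))
    exact ⟨μ₀, hμ₀, fun x ↦ hF.closure_add_closure_apply hA x ▸ hcoercive x⟩

/-- For a joint pair of abstract Friedrichs operators `(T, T̃)`: both operators
are closable, the closures have the same domain `W₀`, the adjoints `T̃*` and `T*` have the same
domain `W`, the graph norms of `T̃*` and `T*` are equivalent on `W`, the restriction of the
closure of `T + T̃` to `W` equals `T̃* + T*`, and the pair of closures is again a joint pair of
abstract Friedrichs operators. -/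
theorem statement1 (T Tt : H →ₗ.[ℂ] H) (hF : IsFriedrichsPair T Tt) :
    T.IsClosable ∧ Tt.IsClosable ∧
    T.closure.domain = Tt.closure.domain ∧
    (Tt†).domain = (T†).domain ∧
    (∃ c₁ : ℝ, 0 < c₁ ∧ ∃ c₂ : ℝ, 0 < c₂ ∧
      ∀ (u : (Tt†).domain) (v : (T†).domain), (u : H) = (v : H) →
        ‖(u : H)‖ ^ 2 + ‖(Tt†) u‖ ^ 2 ≤ c₁ * (‖(u : H)‖ ^ 2 + ‖(T†) v‖ ^ 2) ∧
        ‖(u : H)‖ ^ 2 + ‖(T†) v‖ ^ 2 ≤ c₂ * (‖(u : H)‖ ^ 2 + ‖(Tt†) u‖ ^ 2)) ∧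
    (T + Tt).closure.domRestrict (Tt†).domain = Tt† + T† ∧
    IsFriedrichsPair T.closure Tt.closure :=
  ⟨hF.isClosable, hF.symm.isClosable, hF.closure_domain_eq, hF.adjoint_domain_eq,
    hF.adjoint_graphNorm_sq_equiv, hF.closure_add_domRestrict_adjoint_domain, hF.closure⟩
end
end

section
/- Let (T₀, T̃₀) be a joint pair of closed abstract Friedrichs operators on a complex Hilbert space H, and let (T₁|_V, T̃₁|_Ṽ) be a pair of mutually adjoint realisations relative to (T₀, T̃₀). If the pair (V, Ṽ) has definite sign with respect to the boundary form, i.e. [u | u] ≥ 0 for all u ∈ V and [v | v] ≤ 0 for all v ∈ Ṽ, then (T₁|_V, T̃₁|_Ṽ) is a pair of mutually adjoint BIJECTIVE realisations relative to (T₀, T̃₀). -/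
open LinearPMap
open scoped LinearPMap

noncomputable section

variable {H : Type*} [NormedAddCommGroup H] [InnerProductSpace ℂ H] [CompleteSpace H]

local notation "⟪" x ", " y "⟫" => @inner ℂ _ _ x y

open scoped ComplexOrder

/-!
By (T2) and (T3), `T + T̃` extends to a bounded, symmetric operator `C` on `H` with
`Re ⟪C x, x⟫ ≥ 2 μ₀ ‖x‖²`. Testing against the minimal domain shows that every `u` in the domain of
one of `T₁ = T̃*`, `T̃₁ = T*` lies in the domain of the other, with `T₁ u + T̃₁ u = C u`. Hence
`Re [u | u] = 2 Re ⟪T₁ u, u⟫ - Re ⟪C u, u⟫ = Re ⟪C u, u⟫ - 2 Re ⟪u, T̃₁ u⟫`, so the sign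
conditions bound `T₁|_V` and `T̃₁|_Ṽ` below by `μ₀`. A closed operator that is bounded below has
closed range, and its range is dense as soon as its adjoint is injective; since the two realisations
are each other's adjoints (in particular closed), both are bijective.
-/

open scoped InnerProductSpace

section InnerBounds

variable {𝕜 E : Type*} [RCLike 𝕜] [NormedAddCommGroup E] [InnerProductSpace 𝕜 E]

theorem mul_norm_le_norm_of_mul_norm_sq_le_re_inner {μ : ℝ} {a u : E}
    (h : μ * ‖u‖ ^ 2 ≤ RCLike.re ⟪a, u⟫_𝕜) : μ * ‖u‖ ≤ ‖a‖ := by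
  rcases (norm_nonneg u).eq_or_lt with hu | hu
  · rw [← hu, mul_zero]; exact norm_nonneg a
  · refine le_of_mul_le_mul_right ?_ hu
    calc μ * ‖u‖ * ‖u‖ = μ * ‖u‖ ^ 2 := by ring
      _ ≤ RCLike.re ⟪a, u⟫_𝕜 := h
      _ ≤ ‖a‖ * ‖u‖ := (RCLike.re_le_norm _).trans (norm_inner_le_norm _ _)

variable {μ : ℝ} {a b c u : E}

theorem mul_norm_le_norm_left_of_re_inner_sub_nonneg (habc : a + b = c)
    (hcoer : 2 * μ * ‖u‖ ^ 2 ≤ RCLike.re ⟪c, u⟫_𝕜)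
    (h : 0 ≤ RCLike.re (⟪a, u⟫_𝕜 - ⟪u, b⟫_𝕜)) : μ * ‖u‖ ≤ ‖a‖ := by
  rw [← habc, inner_add_left, _root_.map_add] at hcoer
  rw [_root_.map_sub, inner_re_symm u b] at h
  exact mul_norm_le_norm_of_mul_norm_sq_le_re_inner (by linarith)

theorem mul_norm_le_norm_right_of_re_inner_sub_nonpos (habc : a + b = c)
    (hcoer : 2 * μ * ‖u‖ ^ 2 ≤ RCLike.re ⟪c, u⟫_𝕜)
    (h : RCLike.re (⟪a, u⟫_𝕜 - ⟪u, b⟫_𝕜) ≤ 0) : μ * ‖u‖ ≤ ‖b‖ := by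
  rw [← habc, inner_add_left, _root_.map_add] at hcoer
  rw [_root_.map_sub, inner_re_symm u b] at h
  exact mul_norm_le_norm_of_mul_norm_sq_le_re_inner (by linarith)

end InnerBounds

namespace LinearPMap

section Normed

variable {𝕜 E F : Type*} [NontriviallyNormedField 𝕜] [NormedAddCommGroup E] [NormedSpace 𝕜 E]
  [NormedAddCommGroup F] [NormedSpace 𝕜 F] {A : E →ₗ.[𝕜] F} {c : ℝ}

theorem injective_of_mul_norm_le (hc : 0 < c) (hA : ∀ x : A.domain, c * ‖(x : E)‖ ≤ ‖A x‖) :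
    Function.Injective A := by
  refine (injective_iff_map_eq_zero A.toFun).2 fun x hx => ?_
  have hx' := hA x
  rw [show A x = 0 from hx, norm_zero] at hx'
  exact Subtype.ext (norm_le_zero_iff.1 (nonpos_of_mul_nonpos_right hx' hc))

theorem isClosed_range_of_mul_norm_le [CompleteSpace E] [CompleteSpace F] (hcl : A.IsClosed)
    (hc : 0 < c) (hA : ∀ x : A.domain, c * ‖(x : E)‖ ≤ ‖A x‖) : _root_.IsClosed (Set.range A) := by
  have : CompleteSpace A.graph := hcl.completeSpace_coe
  let π : A.graph →L[𝕜] F := (ContinuousLinearMap.snd 𝕜 E F).comp A.graph.subtypeL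
  have hπ : AntilipschitzWith ⟨max c⁻¹ 1, by positivity⟩ π := π.antilipschitz_of_bound fun p => by
    obtain ⟨x, hx, hAx⟩ := (mem_graph_iff A).1 p.2
    have hxA : ‖(x : E)‖ ≤ c⁻¹ * ‖A x‖ := by
      rw [le_inv_mul_iff₀ hc]; exact hA x
    have hπp : π p = A x := hAx.symm
    rw [hπp, Submodule.coe_norm, Prod.norm_def, ← hx, ← hAx]
    exact max_le (hxA.trans (mul_le_mul_of_nonneg_right (le_max_left _ _) (norm_nonneg _)))
      (le_mul_of_one_le_left (norm_nonneg _) (le_max_right _ _))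
  convert hπ.isClosed_range π.uniformContinuous using 1
  ext y
  simp [π, mem_graph_iff]

end Normed

section Inner

variable {𝕜 E F : Type*} [RCLike 𝕜] [NormedAddCommGroup E] [InnerProductSpace 𝕜 E]
  [NormedAddCommGroup F] [InnerProductSpace 𝕜 F] {T S : E →ₗ.[𝕜] E}

theorem IsFormalAdjoint.add_self (h : T.IsFormalAdjoint S) : (T + S).IsFormalAdjoint (T + S) :=
  fun x y => by
    rw [add_apply, add_apply, inner_add_left, inner_add_right, add_comm]
    exact congrArg₂ (· + ·) (h.symm ⟨x, x.2.2⟩ ⟨y, y.2.1⟩) (h ⟨x, x.2.1⟩ ⟨y, y.2.2⟩)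

variable [CompleteSpace E]

theorem exists_adjoint_add_adjoint_eq (hT : Dense (T.domain : Set E))
    (hS : Dense (S.domain : Set E)) (hST : S.domain ≤ T.domain) {C : E →L[𝕜] E}
    (hCsymm : (C : E →ₗ[𝕜] E).IsSymmetric) (hC : ∀ x : (T + S).domain, C x = (T + S) x)
    (y : T†.domain) : ∃ hy : (y : E) ∈ S†.domain, T† y + S† ⟨y, hy⟩ = C y := by
  have hyS : ∀ x : S.domain, ⟪C y - T† y, (x : E)⟫_𝕜 = ⟪(y : E), S x⟫_𝕜 := fun x => by
    have hCx : C x = T ⟨x, hST x.2⟩ + S x := hC ⟨x, hST x.2, x.2⟩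
    have hCyx : ⟪C y, (x : E)⟫_𝕜 = ⟪(y : E), C x⟫_𝕜 := hCsymm y x
    rw [inner_sub_left, hCyx, hCx, inner_add_right,
      adjoint_isFormalAdjoint hT y ⟨x, hST x.2⟩, add_sub_cancel_left]
  refine ⟨mem_adjoint_domain_of_exists _ ⟨_, hyS⟩, ?_⟩
  rw [adjoint_apply_eq hS _ hyS, add_sub_cancel]

theorem orthogonal_range_eq_bot {A : E →ₗ.[𝕜] F} (hd : Dense (A.domain : Set E))
    (hinj : Function.Injective (A†)) : (LinearMap.range A.toFun)ᗮ = ⊥ := by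
  refine (Submodule.eq_bot_iff _).2 fun z hz => ?_
  have hzA : ∀ x : A.domain, ⟪(0 : E), (x : E)⟫_𝕜 = ⟪z, A x⟫_𝕜 := fun x => by
    rw [inner_zero_left, eq_comm]
    exact (Submodule.mem_orthogonal' _ z).1 hz _ (LinearMap.mem_range_self A.toFun x)
  have hmem : z ∈ A†.domain := mem_adjoint_domain_of_exists z ⟨0, hzA⟩
  have hAz : A† ⟨z, hmem⟩ = A† 0 := (adjoint_apply_eq hd _ hzA).trans (map_zero _).symm
  exact congrArg Subtype.val (hinj hAz)

variable [CompleteSpace F]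

theorem bijective_of_isClosed_of_mul_norm_le {A : E →ₗ.[𝕜] F} {c : ℝ} (hcl : A.IsClosed)
    (hd : Dense (A.domain : Set E)) (hc : 0 < c) (hA : ∀ x : A.domain, c * ‖(x : E)‖ ≤ ‖A x‖)
    (hinj : Function.Injective (A†)) : Function.Bijective A := by
  refine ⟨injective_of_mul_norm_le hc hA, LinearMap.range_eq_top.1 ?_⟩
  have hclosed : _root_.IsClosed (LinearMap.range A.toFun : Set F) := by
    rw [LinearMap.coe_range]; exact isClosed_range_of_mul_norm_le hcl hc hA
  rw [← hclosed.submodule_topologicalClosure_eq, Submodule.topologicalClosure_eq_top_iff]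
  exact orthogonal_range_eq_bot hd hinj

theorem bijective_of_adjoint_eq {A : E →ₗ.[𝕜] F} {B : F →ₗ.[𝕜] E} {c : ℝ}
    (hAd : Dense (A.domain : Set E)) (hBd : Dense (B.domain : Set F)) (hAB : A† = B) (hBA : B† = A)
    (hc : 0 < c) (hA : ∀ x : A.domain, c * ‖(x : E)‖ ≤ ‖A x‖)
    (hB : ∀ y : B.domain, c * ‖(y : F)‖ ≤ ‖B y‖) : Function.Bijective A :=
  bijective_of_isClosed_of_mul_norm_le (hBA ▸ adjoint_isClosed hBd) hAd hc hA
    (hAB ▸ injective_of_mul_norm_le hc hB)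

end Inner

end LinearPMap

theorem IsFriedrichsPair.exists_extension_add {T Tt : H →ₗ.[ℂ] H} (hF : IsFriedrichsPair T Tt) :
    ∃ (C : H →L[ℂ] H) (μ₀ : ℝ), 0 < μ₀ ∧ (∀ x : (T + Tt).domain, C x = (T + Tt) x) ∧
      (C : H →ₗ[ℂ] H).IsSymmetric ∧ ∀ x, 2 * μ₀ * ‖x‖ ^ 2 ≤ (⟪C x, x⟫).re := by
  obtain ⟨c, -, hbound⟩ := hF.t2
  obtain ⟨μ₀, hμ, hcoer⟩ := hF.t3
  have hD : Dense ((T + Tt).domain : Set H) := by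
    rw [add_domain, ← hF.dom_eq, inf_idem]; exact hF.dense'
  set D := (T + Tt).domain
  let C := (LinearMap.mkContinuous (T + Tt).toFun c hbound).extend D.subtypeL
  have hC : ∀ x : D, C x = (T + Tt) x := ContinuousLinearMap.extend_eq _
    hD.denseRange_val isUniformEmbedding_subtype_val.isUniformInducing
  refine ⟨C, μ₀, hμ, hC, fun x y => ?_, fun x => ?_⟩
  · have hsymm : Set.EqOn (fun p : H × H => ⟪C p.1, p.2⟫) (fun p => ⟪p.1, C p.2⟫)
        ((D : Set H) ×ˢ (D : Set H)) := fun p hp => by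
      have h := IsFormalAdjoint.add_self hF.t1 ⟨p.1, hp.1⟩ ⟨p.2, hp.2⟩
      rwa [← hC, ← hC] at h
    exact congrFun (Continuous.ext_on (hD.prod hD) (by fun_prop) (by fun_prop) hsymm) (x, y)
  · have hclosed : IsClosed {x : H | 2 * μ₀ * ‖x‖ ^ 2 ≤ (⟪C x, x⟫).re} :=
      isClosed_le (by fun_prop) (by fun_prop)
    refine closure_minimal (fun x hx => ?_) hclosed (hD x)
    show _ ≤ (⟪C x, x⟫).re
    rw [hC ⟨x, hx⟩]
    exact hcoer ⟨x, hx⟩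

theorem statement6_general (T Tt : H →ₗ.[ℂ] H) (hF : IsFriedrichsPair T Tt)
    (V Vt : Submodule ℂ H) (hV₀ : T.domain ≤ V) (hVt₀ : Tt.domain ≤ Vt)
    (hadj₁ : ((Tt†).domRestrict V)† = (T†).domRestrict Vt)
    (hadj₂ : ((T†).domRestrict Vt)† = (Tt†).domRestrict V)
    (hsign₁ : ∀ (u₁ : (Tt†).domain) (u₂ : (T†).domain), (u₁ : H) = (u₂ : H) →
      (u₁ : H) ∈ V → 0 ≤ ⟪(Tt†) u₁, (u₁ : H)⟫ - ⟪(u₁ : H), (T†) u₂⟫)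
    (hsign₂ : ∀ (v₁ : (Tt†).domain) (v₂ : (T†).domain), (v₁ : H) = (v₂ : H) →
      (v₁ : H) ∈ Vt → ⟪(Tt†) v₁, (v₁ : H)⟫ - ⟪(v₁ : H), (T†) v₂⟫ ≤ 0) :
    Function.Bijective (fun x : ((Tt†).domRestrict V).domain => ((Tt†).domRestrict V) x) ∧
    Function.Bijective (fun x : ((T†).domRestrict Vt).domain => ((T†).domRestrict Vt) x) := by
  obtain ⟨C, μ₀, hμ, hC, hCsymm, hCcoer⟩ := hF.exists_extension_add
  have hdT : Dense (T.domain : Set H) := hF.dense'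
  have hdTt : Dense (Tt.domain : Set H) := hF.dom_eq ▸ hdT
  have hA : ∀ u : ((Tt†).domRestrict V).domain, μ₀ * ‖(u : H)‖ ≤ ‖(Tt†).domRestrict V u‖ := by
    intro u
    obtain ⟨hu, hCu⟩ := exists_adjoint_add_adjoint_eq hdTt hdT hF.dom_eq.le hCsymm
      (add_comm T Tt ▸ hC) ⟨u, u.2.2⟩
    rw [show (Tt†).domRestrict V u = Tt† ⟨u, u.2.2⟩ from domRestrict_apply rfl]
    exact mul_norm_le_norm_left_of_re_inner_sub_nonneg (𝕜 := ℂ) hCu (hCcoer u)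
      (Complex.nonneg_iff.1 (hsign₁ _ ⟨u, hu⟩ rfl u.2.1)).1
  have hB : ∀ v : ((T†).domRestrict Vt).domain, μ₀ * ‖(v : H)‖ ≤ ‖(T†).domRestrict Vt v‖ := by
    intro v
    obtain ⟨hv, hCv⟩ := exists_adjoint_add_adjoint_eq hdT hdTt hF.dom_eq.ge hCsymm hC ⟨v, v.2.2⟩
    rw [show (T†).domRestrict Vt v = T† ⟨v, v.2.2⟩ from domRestrict_apply rfl]
    exact mul_norm_le_norm_right_of_re_inner_sub_nonpos (𝕜 := ℂ) ((add_comm _ _).trans hCv)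
      (hCcoer v) (Complex.nonpos_iff.1 (hsign₂ ⟨v, hv⟩ _ rfl v.2.1)).1
  have hAd : Dense (((Tt†).domRestrict V).domain : Set H) :=
    hdT.mono fun x hx => ⟨hV₀ hx, ((IsFormalAdjoint.symm hF.t1).le_adjoint hdTt).1 hx⟩
  have hBd : Dense (((T†).domRestrict Vt).domain : Set H) :=
    hdTt.mono fun x hx => ⟨hVt₀ hx, (IsFormalAdjoint.le_adjoint hdT hF.t1).1 hx⟩
  exact ⟨bijective_of_adjoint_eq hAd hBd hadj₁ hadj₂ hμ hA hB,
    bijective_of_adjoint_eq hBd hAd hadj₂ hadj₁ hμ hB hA⟩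

/-- Let `(T₀, T̃₀)` be a joint pair of closed abstract Friedrichs operators and
let `(T₁|_V, T̃₁|_Ṽ)` be a pair of mutually adjoint realisations relative to it. If the pair
`(V, Ṽ)` has definite sign with respect to the boundary form, i.e. `[u | u] ≥ 0` on `V` and
`[v | v] ≤ 0` on `Ṽ`, then both `T₁|_V` and `T̃₁|_Ṽ` are bijections onto `H`, i.e.
`(T₁|_V, T̃₁|_Ṽ)` is a pair of mutually adjoint bijective realisations. -/
theorem statement6 (T Tt : H →ₗ.[ℂ] H) (hF : IsFriedrichsPair T Tt)
    (hT : T.IsClosed) (hTt : Tt.IsClosed)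
    (V Vt : Submodule ℂ H)
    (hV₀ : T.domain ≤ V) (hVW : V ≤ (Tt†).domain)
    (hVt₀ : Tt.domain ≤ Vt) (hVtW : Vt ≤ (T†).domain)
    (hadj₁ : ((Tt†).domRestrict V)† = (T†).domRestrict Vt)
    (hadj₂ : ((T†).domRestrict Vt)† = (Tt†).domRestrict V)
    (hsign₁ : ∀ (u₁ : (Tt†).domain) (u₂ : (T†).domain), (u₁ : H) = (u₂ : H) →
      (u₁ : H) ∈ V → 0 ≤ ⟪(Tt†) u₁, (u₁ : H)⟫ - ⟪(u₁ : H), (T†) u₂⟫)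
    (hsign₂ : ∀ (v₁ : (Tt†).domain) (v₂ : (T†).domain), (v₁ : H) = (v₂ : H) →
      (v₁ : H) ∈ Vt → ⟪(Tt†) v₁, (v₁ : H)⟫ - ⟪(v₁ : H), (T†) v₂⟫ ≤ 0) :
    Function.Bijective (fun x : ((Tt†).domRestrict V).domain => ((Tt†).domRestrict V) x) ∧
    Function.Bijective (fun x : ((T†).domRestrict Vt).domain => ((T†).domRestrict Vt) x) :=
  statement6_general T Tt hF V Vt hV₀ hVt₀ hadj₁ hadj₂ hsign₁ hsign₂
end
end
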